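/- arXiv:1405.5613 — 5 statements merged into one kernel-verified Lean document; each statement's English description precedes it below -/
import Mathlib

section
/- For indices 1 ≤ i ≤ j ≤ n, the function Θ_{i,j}(x) = max{L_i(x), R_j(x)} is unimodal in x on [v_i, v_j] and attains its minimum over [v_i, v_j] at a unique point x*(1, i, j). -/
open Finset

/-- Left evacuation time `L_i(x)`. -/
noncomputable def evacL (v w : ℕ → ℝ) (c τ : ℝ) (n i : ℕ) (x : ℝ) : ℝ :=
  ((Finset.Icc i n).filter (fun l => v l < x)).fold max 0
    (fun l => τ * (x - v l) + (∑ h ∈ Finset.Icc i l, w h) / c)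

/-- Right evacuation time `R_j(x)`. -/
noncomputable def evacR (v w : ℕ → ℝ) (c τ : ℝ) (n j : ℕ) (x : ℝ) : ℝ :=
  ((Finset.Icc 1 j).filter (fun l => x < v l)).fold max 0
    (fun l => τ * (v l - x) + (∑ h ∈ Finset.Icc l j, w h) / c)

/-- 1-sink evacuation cost `Θ_{i,j}(x)`. -/
noncomputable def theta (v w : ℕ → ℝ) (c τ : ℝ) (n i j : ℕ) (x : ℝ) : ℝ :=
  max (evacL v w c τ n i x) (evacR v w c τ n j x)

/-- `OPT(1,i,j)`. -/
noncomputable def OPT1 (v w : ℕ → ℝ) (c τ : ℝ) (n i j : ℕ) : ℝ :=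
  sInf (theta v w c τ n i j '' Set.Icc (v i) (v j))

/-- `OPT(p,i,j)` for general `p`. -/
noncomputable def OPTk (v w : ℕ → ℝ) (c τ : ℝ) (n p i j : ℕ) : ℝ :=
  if p = 1 then OPT1 v w c τ n i j
  else sInf { m : ℝ | ∃ t : ℕ → ℕ, t 0 = i - 1 ∧ t p = j ∧ StrictMonoOn t (Set.Icc 0 p) ∧
        m = (Finset.Icc 1 p).fold max 0 (fun q => OPT1 v w c τ n (t (q - 1) + 1) (t q)) }


lemma evacL_nonneg (v w : ℕ → ℝ) (c τ : ℝ) (n i : ℕ) (x : ℝ) :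
    0 ≤ evacL v w c τ n i x :=
  (Finset.le_fold_max _).2 (Or.inl le_rfl)

lemma evacR_nonneg (v w : ℕ → ℝ) (c τ : ℝ) (n j : ℕ) (x : ℝ) :
    0 ≤ evacR v w c τ n j x :=
  (Finset.le_fold_max _).2 (Or.inl le_rfl)

lemma evacL_term_le (v w : ℕ → ℝ) (c τ : ℝ) (n i : ℕ) (x : ℝ) (l : ℕ)
    (hl : l ∈ Finset.Icc i n) (hlx : v l < x) :
    τ * (x - v l) + (∑ h ∈ Finset.Icc i l, w h) / c ≤ evacL v w c τ n i x :=
  (Finset.le_fold_max _).2 (Or.inr ⟨l, Finset.mem_filter.2 ⟨hl, hlx⟩, le_rfl⟩)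

lemma evacR_term_le (v w : ℕ → ℝ) (c τ : ℝ) (n j : ℕ) (x : ℝ) (l : ℕ)
    (hl : l ∈ Finset.Icc 1 j) (hlx : x < v l) :
    τ * (v l - x) + (∑ h ∈ Finset.Icc l j, w h) / c ≤ evacR v w c τ n j x :=
  (Finset.le_fold_max _).2 (Or.inr ⟨l, Finset.mem_filter.2 ⟨hl, hlx⟩, le_rfl⟩)

lemma evacL_mono (v w : ℕ → ℝ) (c τ : ℝ) (n i : ℕ) {x y : ℝ}
    (hτ : 0 ≤ τ) (hxy : x ≤ y) :
    evacL v w c τ n i x ≤ evacL v w c τ n i y := by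
  rw [evacL, Finset.fold_max_le]
  refine ⟨evacL_nonneg v w c τ n i y, fun l hl => ?_⟩
  obtain ⟨hl1, hl2⟩ := Finset.mem_filter.1 hl
  have h := evacL_term_le v w c τ n i y l hl1 (lt_of_lt_of_le hl2 hxy)
  nlinarith [mul_le_mul_of_nonneg_left (sub_le_sub_right hxy (v l)) hτ]

lemma evacR_anti (v w : ℕ → ℝ) (c τ : ℝ) (n j : ℕ) {x y : ℝ}
    (hτ : 0 ≤ τ) (hxy : x ≤ y) :
    evacR v w c τ n j y ≤ evacR v w c τ n j x := by
  rw [evacR, Finset.fold_max_le]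
  refine ⟨evacR_nonneg v w c τ n j x, fun l hl => ?_⟩
  obtain ⟨hl1, hl2⟩ := Finset.mem_filter.1 hl
  have h := evacR_term_le v w c τ n j x l hl1 (lt_of_le_of_lt hxy hl2)
  nlinarith [mul_le_mul_of_nonneg_left (sub_le_sub_left hxy (v l)) hτ]

lemma evacL_lower (v w : ℕ → ℝ) (c τ : ℝ) (n i : ℕ) {x y : ℝ}
    (hτ : 0 ≤ τ) (hc : 0 < c) (hwi : 0 ≤ w i) (hin : i ≤ n)
    (hvx : v i < x) (hxy : x ≤ y) :
    evacL v w c τ n i x + τ * (y - x) ≤ evacL v w c τ n i y := by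
  have hSi : 0 ≤ (∑ h ∈ Finset.Icc i i, w h) / c := by
    rw [Finset.Icc_self, Finset.sum_singleton]; positivity
  have hi' : i ∈ Finset.Icc i n := Finset.mem_Icc.2 ⟨le_rfl, hin⟩
  have hterm_i := evacL_term_le v w c τ n i y i hi' (lt_of_lt_of_le hvx hxy)
  have h0 : τ * (y - x) ≤ evacL v w c τ n i y := by
    nlinarith [mul_le_mul_of_nonneg_left (sub_le_sub_left hvx.le y) hτ]
  have key : evacL v w c τ n i x ≤ evacL v w c τ n i y - τ * (y - x) := by
    rw [evacL, Finset.fold_max_le]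
    refine ⟨by linarith, fun l hl => ?_⟩
    obtain ⟨hl1, hl2⟩ := Finset.mem_filter.1 hl
    have h := evacL_term_le v w c τ n i y l hl1 (lt_of_lt_of_le hl2 hxy)
    have : τ * (y - v l) = τ * (x - v l) + τ * (y - x) := by ring
    linarith
  linarith

lemma evacR_lower (v w : ℕ → ℝ) (c τ : ℝ) (n j : ℕ) {x y : ℝ}
    (hτ : 0 ≤ τ) (hc : 0 < c) (hwj : 0 ≤ w j) (hj1 : 1 ≤ j)
    (hxy : x ≤ y) (hyv : y < v j) :
    evacR v w c τ n j y + τ * (y - x) ≤ evacR v w c τ n j x := by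
  have hSj : 0 ≤ (∑ h ∈ Finset.Icc j j, w h) / c := by
    rw [Finset.Icc_self, Finset.sum_singleton]; positivity
  have hj' : j ∈ Finset.Icc 1 j := Finset.mem_Icc.2 ⟨hj1, le_rfl⟩
  have hterm_j := evacR_term_le v w c τ n j x j hj' (lt_of_le_of_lt hxy hyv)
  have h0 : τ * (y - x) ≤ evacR v w c τ n j x := by
    nlinarith [mul_le_mul_of_nonneg_left (sub_le_sub_right hyv.le x) hτ]
  have key : evacR v w c τ n j y ≤ evacR v w c τ n j x - τ * (y - x) := by
    rw [evacR, Finset.fold_max_le]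
    refine ⟨by linarith, fun l hl => ?_⟩
    obtain ⟨hl1, hl2⟩ := Finset.mem_filter.1 hl
    have h := evacR_term_le v w c τ n j x l hl1 (lt_of_le_of_lt hxy hl2)
    have : τ * (v l - x) = τ * (v l - y) + τ * (y - x) := by ring
    linarith
  linarith

lemma evacL_upper (v w : ℕ → ℝ) (c τ : ℝ) (n i : ℕ) {x y : ℝ}
    (hτ : 0 ≤ τ) (hxy : x ≤ y)
    (hGap : ∀ l ∈ Finset.Icc i n, v l < y → v l < x) :
    evacL v w c τ n i y ≤ evacL v w c τ n i x + τ * (y - x) := by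
  conv_lhs => rw [evacL]
  rw [Finset.fold_max_le]
  constructor
  · have := evacL_nonneg v w c τ n i x
    nlinarith
  · intro l hl
    obtain ⟨hl1, hl2⟩ := Finset.mem_filter.1 hl
    have h := evacL_term_le v w c τ n i x l hl1 (hGap l hl1 hl2)
    have : τ * (y - v l) = τ * (x - v l) + τ * (y - x) := by ring
    linarith

lemma evacR_upper (v w : ℕ → ℝ) (c τ : ℝ) (n j : ℕ) {x y : ℝ}
    (hτ : 0 ≤ τ) (hxy : x ≤ y)
    (hGap : ∀ l ∈ Finset.Icc 1 j, x < v l → y < v l) :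
    evacR v w c τ n j x ≤ evacR v w c τ n j y + τ * (y - x) := by
  conv_lhs => rw [evacR]
  rw [Finset.fold_max_le]
  constructor
  · have := evacR_nonneg v w c τ n j y
    nlinarith
  · intro l hl
    obtain ⟨hl1, hl2⟩ := Finset.mem_filter.1 hl
    have h := evacR_term_le v w c τ n j y l hl1 (hGap l hl1 hl2)
    have : τ * (v l - x) = τ * (v l - y) + τ * (y - x) := by ring
    linarith

lemma evacL_pos (v w : ℕ → ℝ) (c τ : ℝ) (n i : ℕ) {x : ℝ}
    (hτ : 0 < τ) (hc : 0 < c) (hwi : 0 < w i) (hin : i ≤ n) (hvx : v i < x) :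
    0 < evacL v w c τ n i x := by
  have hi' : i ∈ Finset.Icc i n := Finset.mem_Icc.2 ⟨le_rfl, hin⟩
  have h := evacL_term_le v w c τ n i x i hi' hvx
  have hSi : 0 < (∑ h ∈ Finset.Icc i i, w h) / c := by
    rw [Finset.Icc_self, Finset.sum_singleton]; positivity
  nlinarith

lemma evacL_eq_zero (v w : ℕ → ℝ) (c τ : ℝ) (n i : ℕ) {x : ℝ}
    (h : ∀ l ∈ Finset.Icc i n, ¬ v l < x) :
    evacL v w c τ n i x = 0 := by
  rw [evacL, Finset.filter_false_of_mem h, Finset.fold_empty]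

lemma evacR_eq_zero (v w : ℕ → ℝ) (c τ : ℝ) (n j : ℕ) {x : ℝ}
    (h : ∀ l ∈ Finset.Icc 1 j, ¬ x < v l) :
    evacR v w c τ n j x = 0 := by
  rw [evacR, Finset.filter_false_of_mem h, Finset.fold_empty]

lemma avoid_left (v : ℕ → ℝ) (n : ℕ) {a b : ℝ} (hab : a < b) :
    ∃ z, a < z ∧ z < b ∧ ∀ l ∈ Finset.Icc 1 n, v l < b → v l < z := by
  classical
  by_cases hFe : ((Finset.Icc 1 n).filter (fun l => v l < b)).Nonempty
  · set F := (Finset.Icc 1 n).filter (fun l => v l < b) with hF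
    set m := F.sup' hFe v with hm
    have hmb : m < b := (Finset.sup'_lt_iff hFe).2 fun l hl => (Finset.mem_filter.1 hl).2
    have hmab : max m a < b := max_lt hmb hab
    refine ⟨(max m a + b) / 2, ?_, by linarith, ?_⟩
    · have := le_max_right m a; linarith
    · intro l hl hlb
      have h1 : v l ≤ m := Finset.le_sup' v (Finset.mem_filter.2 ⟨hl, hlb⟩)
      have h2 := le_max_left m a
      linarith
  · refine ⟨(a + b) / 2, by linarith, by linarith, fun l hl hlb => ?_⟩
    exact absurd ⟨l, Finset.mem_filter.2 ⟨hl, hlb⟩⟩ hFe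

lemma avoid_right (v : ℕ → ℝ) (n : ℕ) {a b : ℝ} (hab : a < b) :
    ∃ z, a < z ∧ z < b ∧ ∀ l ∈ Finset.Icc 1 n, a < v l → z < v l := by
  classical
  by_cases hFe : ((Finset.Icc 1 n).filter (fun l => a < v l)).Nonempty
  · set F := (Finset.Icc 1 n).filter (fun l => a < v l) with hF
    set m := F.inf' hFe v with hm
    have hma : a < m := (Finset.lt_inf'_iff hFe).2 fun l hl => (Finset.mem_filter.1 hl).2
    have hmab : a < min m b := lt_min hma hab
    refine ⟨(a + min m b) / 2, by linarith, ?_, ?_⟩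
    · have := min_le_right m b; linarith
    · intro l hl hla
      have h1 : m ≤ v l := Finset.inf'_le v (Finset.mem_filter.2 ⟨hl, hla⟩)
      have h2 := min_le_left m b
      linarith
  · refine ⟨(a + b) / 2, by linarith, by linarith, fun l hl hla => ?_⟩
    exact absurd ⟨l, Finset.mem_filter.2 ⟨hl, hla⟩⟩ hFe

/-- Θ_(i,j) is unimodal (quasiconvex) on [v_i, v_j] and attains its
minimum over [v_i, v_j] at a unique point x*(1,i,j). -/
theorem stmt1 (n : ℕ) (v w : ℕ → ℝ) (c τ : ℝ) (i j : ℕ)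
    (hi : 1 ≤ i) (hij : i ≤ j) (hjn : j ≤ n)
    (hv1 : v 1 = 0) (hv : StrictMonoOn v (Set.Icc 1 n))
    (hw : ∀ h, 1 ≤ h → h ≤ n → 0 < w h) (hc : 0 < c) (hτ : 0 < τ) :
    (∀ x ∈ Set.Icc (v i) (v j), ∀ y ∈ Set.Icc (v i) (v j), ∀ z ∈ Set.Icc (v i) (v j),
      x ≤ y → y ≤ z →
      theta v w c τ n i j y ≤ max (theta v w c τ n i j x) (theta v w c τ n i j z)) ∧
    (∃ xs ∈ Set.Icc (v i) (v j), ∀ y ∈ Set.Icc (v i) (v j), y ≠ xs →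
      theta v w c τ n i j xs < theta v w c τ n i j y) := by
  have hin : i ≤ n := hij.trans hjn
  have hiIcc : i ∈ Set.Icc 1 n := ⟨hi, hin⟩
  have hjIcc : j ∈ Set.Icc 1 n := ⟨hi.trans hij, hjn⟩
  have hwi : 0 < w i := hw i hi hin
  have hwj : 0 < w j := hw j (hi.trans hij) hjn
  set Lf : ℝ → ℝ := fun x => evacL v w c τ n i x with hLf
  set Rf : ℝ → ℝ := fun x => evacR v w c τ n j x with hRf
  have htheta : ∀ x, theta v w c τ n i j x = max (Lf x) (Rf x) := fun x => rfl
  constructor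
  · -- unimodality
    intro x hx y hy z hz hxy hyz
    simp only [htheta]
    refine max_le ?_ ?_
    · exact le_trans (le_trans (evacL_mono v w c τ n i hτ.le hyz) (le_max_left _ _))
        (le_max_right _ _)
    · exact le_trans (le_trans (evacR_anti v w c τ n j hτ.le hxy) (le_max_right _ _))
        (le_max_left _ _)
  · -- unique minimizer
    have hvij : v i ≤ v j := by
      rcases eq_or_lt_of_le hij with h | h
      · rw [h]
      · exact (hv hiIcc hjIcc h).le
    set T : Set ℝ := {x | x ∈ Set.Icc (v i) (v j) ∧ Rf x ≤ Lf x} with hT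
    have hRvj : Rf (v j) = 0 := by
      refine evacR_eq_zero v w c τ n j fun l hl => ?_
      obtain ⟨hl1, hl2⟩ := Finset.mem_Icc.1 hl
      have : v l ≤ v j := by
        rcases eq_or_lt_of_le hl2 with h | h
        · rw [h]
        · exact (hv ⟨hl1, hl2.trans hjn⟩ hjIcc h).le
      linarith
    have hvjT : v j ∈ T := ⟨⟨hvij, le_rfl⟩, by rw [hRvj]; exact evacL_nonneg v w c τ n i (v j)⟩
    have hTne : T.Nonempty := ⟨v j, hvjT⟩
    have hTbdd : BddBelow T := ⟨v i, fun t ht => ht.1.1⟩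
    set x0 := sInf T with hx0
    have hx0le : x0 ≤ v j := csInf_le hTbdd hvjT
    have hx0ge : v i ≤ x0 := le_csInf hTne fun t ht => ht.1.1
    have hx0I : x0 ∈ Set.Icc (v i) (v j) := ⟨hx0ge, hx0le⟩
    refine ⟨x0, hx0I, fun y hy hne => ?_⟩
    simp only [htheta]
    by_cases hA : Rf x0 ≤ Lf x0
    · -- case A
      rw [max_eq_left hA]
      rcases hne.lt_or_gt with hlt | hlt
      · -- y < x0
        have hynT : ¬ (Rf y ≤ Lf y) := by
          intro hyT
          exact absurd (csInf_le hTbdd ⟨hy, hyT⟩) (not_le.2 hlt)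
        obtain ⟨z, hz1, hz2, hz3⟩ := avoid_left v n (a := (y + x0) / 2) (b := x0) (by linarith)
        have hzy : y < z := by linarith
        have hzvi : v i < z := lt_of_le_of_lt hy.1 hzy
        have hznT : ¬ (Rf z ≤ Lf z) := by
          intro hzT
          refine absurd (csInf_le hTbdd ⟨⟨?_, ?_⟩, hzT⟩) (not_le.2 hz2)
          · linarith [hy.1]
          · linarith
        have hup : Lf x0 ≤ Lf z + τ * (x0 - z) := by
          refine evacL_upper v w c τ n i hτ.le hz2.le fun l hl hlx => ?_
          obtain ⟨hl1, hl2⟩ := Finset.mem_Icc.1 hl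
          exact hz3 l (Finset.mem_Icc.2 ⟨hi.trans hl1, hl2⟩) hlx
        have hlow : Rf z + τ * (z - y) ≤ Rf y :=
          evacR_lower v w c τ n j hτ.le hc hwj.le (hi.trans hij) hzy.le (lt_of_lt_of_le hz2 hx0le)
        have : Lf x0 < Rf y := by
          push_neg at hznT
          nlinarith
        exact lt_of_lt_of_le this (le_max_right _ _)
      · -- x0 < y
        rcases eq_or_lt_of_le hx0ge with hvi | hvi
        · -- x0 = v i
          have hL0 : Lf x0 = 0 := by
            rw [← hvi]
            refine evacL_eq_zero v w c τ n i fun l hl => ?_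
            obtain ⟨hl1, hl2⟩ := Finset.mem_Icc.1 hl
            have : v i ≤ v l := by
              rcases eq_or_lt_of_le hl1 with h | h
              · rw [h]
              · exact (hv hiIcc ⟨hi.trans hl1, hl2⟩ h).le
            linarith
          rw [hL0]
          have : 0 < Lf y := evacL_pos v w c τ n i hτ hc hwi hin (hvi.trans_lt hlt)
          exact lt_of_lt_of_le this (le_max_left _ _)
        · have := evacL_lower v w c τ n i hτ.le hc hwi.le hin hvi hlt.le
          have hpos : 0 < τ * (y - x0) := mul_pos hτ (by linarith)
          have : Lf x0 < Lf y := by linarith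
          exact lt_of_lt_of_le this (le_max_left _ _)
    · -- case B
      push_neg at hA
      rw [max_eq_right hA.le]
      have hx0vj : x0 < v j := by
        rcases eq_or_lt_of_le hx0le with h | h
        · exact absurd (h ▸ hvjT).2 (not_le.2 hA)
        · exact h
      rcases hne.lt_or_gt with hlt | hlt
      · -- y < x0
        have hlow : Rf x0 + τ * (x0 - y) ≤ Rf y :=
          evacR_lower v w c τ n j hτ.le hc hwj.le (hi.trans hij) hlt.le hx0vj
        have hpos : 0 < τ * (x0 - y) := mul_pos hτ (by linarith)
        have : Rf x0 < Rf y := by linarith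
        exact lt_of_lt_of_le this (le_max_right _ _)
      · -- x0 < y
        obtain ⟨z, hz1, hz2, hz3⟩ := avoid_right v n (a := x0) (b := (x0 + y) / 2) (by linarith)
        have hzy : z < y := by linarith
        have hzvj : z < v j := by linarith [hy.2]
        have hzT : Rf z ≤ Lf z := by
          obtain ⟨t, htT, htz⟩ := exists_lt_of_csInf_lt hTne hz1
          calc Rf z ≤ Rf t := evacR_anti v w c τ n j hτ.le htz.le
            _ ≤ Lf t := htT.2
            _ ≤ Lf z := evacL_mono v w c τ n i hτ.le htz.le
        have hup : Rf x0 ≤ Rf z + τ * (z - x0) := by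
          refine evacR_upper v w c τ n j hτ.le hz1.le fun l hl hlx => ?_
          obtain ⟨hl1, hl2⟩ := Finset.mem_Icc.1 hl
          exact hz3 l (Finset.mem_Icc.2 ⟨hl1, hl2.trans hjn⟩) hlx
        have hlow : Lf z + τ * (y - z) ≤ Lf y :=
          evacL_lower v w c τ n i hτ.le hc hwi.le hin (lt_of_le_of_lt hx0ge hz1) hzy.le
        have : Rf x0 < Lf y := by nlinarith
        exact lt_of_lt_of_le this (le_max_left _ _)
end

section
/- (Lemma 1) For any integers p and i with 2 ≤ p and 2 ≤ i ≤ n−1, let d_{p,i} denote the largest integer t with 1 ≤ t ≤ i−1 minimizing f_{p,i}(t) = max{ OPT(p−1, 1, t), OPT(1, t+1, i) }, and similarly d_{p,i+1} for f_{p,i+1}. Then d_{p,i} ≤ d_{p,i+1}. -/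
open Finset

lemma fold_max_nonneg' {s : Finset ℕ} {f : ℕ → ℝ} : (0:ℝ) ≤ s.fold max 0 f :=
  (Finset.le_fold_max _).2 (Or.inl le_rfl)

lemma fold_max_mono' {s t : Finset ℕ} {f g : ℕ → ℝ} (hst : s ⊆ t)
    (h : ∀ x ∈ s, f x ≤ g x) : s.fold max 0 f ≤ t.fold max 0 g :=
  (Finset.fold_max_le _).2 ⟨fold_max_nonneg', fun x hx =>
    (h x hx).trans ((Finset.le_fold_max _).2 (Or.inr ⟨x, hst hx, le_rfl⟩))⟩

section
variable {v w : ℕ → ℝ} {c τ : ℝ} {n : ℕ}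

lemma theta_nonneg {i j : ℕ} {x : ℝ} : 0 ≤ theta v w c τ n i j x :=
  le_max_of_le_left fold_max_nonneg'

lemma evacL_mono_x (hτ : 0 < τ) {i : ℕ} {x x' : ℝ} (h : x ≤ x') :
    evacL v w c τ n i x ≤ evacL v w c τ n i x' := by
  refine fold_max_mono' ?_ ?_
  · intro l hl
    simp only [Finset.mem_filter] at *
    exact ⟨hl.1, hl.2.trans_le h⟩
  · intro l _
    have : τ * (x - v l) ≤ τ * (x' - v l) :=
      mul_le_mul_of_nonneg_left (by linarith) hτ.le
    linarith

lemma evacR_anti_x (hτ : 0 < τ) {j : ℕ} {x x' : ℝ} (h : x ≤ x') :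
    evacR v w c τ n j x' ≤ evacR v w c τ n j x := by
  refine fold_max_mono' ?_ ?_
  · intro l hl
    simp only [Finset.mem_filter] at *
    exact ⟨hl.1, lt_of_le_of_lt h hl.2⟩
  · intro l _
    have : τ * (v l - x') ≤ τ * (v l - x) :=
      mul_le_mul_of_nonneg_left (by linarith) hτ.le
    linarith

lemma evacL_anti_i (hw : ∀ h, 1 ≤ h → h ≤ n → 0 < w h) (hc : 0 < c)
    {i i' : ℕ} (hi : 1 ≤ i) (hii : i ≤ i') {x : ℝ} :
    evacL v w c τ n i' x ≤ evacL v w c τ n i x := by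
  refine fold_max_mono' ?_ ?_
  · intro l hl
    simp only [Finset.mem_filter, Finset.mem_Icc] at *
    exact ⟨⟨hii.trans hl.1.1, hl.1.2⟩, hl.2⟩
  · intro l hl
    simp only [Finset.mem_filter, Finset.mem_Icc] at hl
    have hsum : ∑ h ∈ Finset.Icc i' l, w h ≤ ∑ h ∈ Finset.Icc i l, w h := by
      refine Finset.sum_le_sum_of_subset_of_nonneg ?_ ?_
      · intro a ha; simp only [Finset.mem_Icc] at *; exact ⟨hii.trans ha.1, ha.2⟩
      · intro a ha _
        simp only [Finset.mem_Icc] at ha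
        exact (hw a (hi.trans ha.1) (ha.2.trans hl.1.2)).le
    linarith [(div_le_div_iff_of_pos_right hc).2 hsum]

lemma evacR_mono_j (hw : ∀ h, 1 ≤ h → h ≤ n → 0 < w h) (hc : 0 < c)
    {j j' : ℕ} (hjj : j ≤ j') (hj' : j' ≤ n) {x : ℝ} :
    evacR v w c τ n j x ≤ evacR v w c τ n j' x := by
  refine fold_max_mono' ?_ ?_
  · intro l hl
    simp only [Finset.mem_filter, Finset.mem_Icc] at *
    exact ⟨⟨hl.1.1, hl.1.2.trans hjj⟩, hl.2⟩
  · intro l hl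
    simp only [Finset.mem_filter, Finset.mem_Icc] at hl
    have hsum : ∑ h ∈ Finset.Icc l j, w h ≤ ∑ h ∈ Finset.Icc l j', w h := by
      refine Finset.sum_le_sum_of_subset_of_nonneg ?_ ?_
      · intro a ha; simp only [Finset.mem_Icc] at *; exact ⟨ha.1, ha.2.trans hjj⟩
      · intro a ha _
        simp only [Finset.mem_Icc] at ha
        exact (hw a (hl.1.1.trans ha.1) (ha.2.trans hj')).le
    linarith [(div_le_div_iff_of_pos_right hc).2 hsum]

lemma evacL_self (hv : StrictMonoOn v (Set.Icc 1 n)) {i : ℕ} (hi1 : 1 ≤ i) (hin : i ≤ n) :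
    evacL v w c τ n i (v i) = 0 := by
  have : (Finset.Icc i n).filter (fun l => v l < v i) = ∅ := by
    rw [Finset.filter_eq_empty_iff]
    intro l hl
    simp only [Finset.mem_Icc] at hl
    have : v i ≤ v l := hv.monotoneOn ⟨hi1, hin⟩ ⟨hi1.trans hl.1, hl.2⟩ hl.1
    linarith
  rw [evacL, this, Finset.fold_empty]

lemma evacR_self (hv : StrictMonoOn v (Set.Icc 1 n)) {j : ℕ} (hj1 : 1 ≤ j) (hjn : j ≤ n) :
    evacR v w c τ n j (v j) = 0 := by
  have : (Finset.Icc 1 j).filter (fun l => v j < v l) = ∅ := by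
    rw [Finset.filter_eq_empty_iff]
    intro l hl
    simp only [Finset.mem_Icc] at hl
    have : v l ≤ v j := hv.monotoneOn ⟨hl.1, hl.2.trans hjn⟩ ⟨hj1, hjn⟩ hl.2
    linarith
  rw [evacR, this, Finset.fold_empty]

lemma OPT1_le_theta {i j : ℕ} {x : ℝ} (hx : x ∈ Set.Icc (v i) (v j)) :
    OPT1 v w c τ n i j ≤ theta v w c τ n i j x := by
  refine csInf_le ⟨0, ?_⟩ ⟨x, hx, rfl⟩
  rintro y ⟨z, _, rfl⟩
  exact theta_nonneg

lemma le_OPT1 {i j : ℕ} {a : ℝ} (hij : v i ≤ v j)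
    (h : ∀ x ∈ Set.Icc (v i) (v j), a ≤ theta v w c τ n i j x) :
    a ≤ OPT1 v w c τ n i j := by
  refine le_csInf ⟨theta v w c τ n i j (v i), ⟨v i, ⟨le_rfl, hij⟩, rfl⟩⟩ ?_
  rintro y ⟨z, hz, rfl⟩
  exact h z hz

lemma OPT1_anti_left (hv : StrictMonoOn v (Set.Icc 1 n))
    (hw : ∀ h, 1 ≤ h → h ≤ n → 0 < w h) (hc : 0 < c) (hτ : 0 < τ)
    {a a' b : ℕ} (ha : 1 ≤ a) (haa : a ≤ a') (hab : a' ≤ b) (hb : b ≤ n) :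
    OPT1 v w c τ n a' b ≤ OPT1 v w c τ n a b := by
  have hma : a ∈ Set.Icc 1 n := ⟨ha, (haa.trans hab).trans hb⟩
  have hma' : a' ∈ Set.Icc 1 n := ⟨ha.trans haa, hab.trans hb⟩
  have hmb : b ∈ Set.Icc 1 n := ⟨ha.trans (haa.trans hab), hb⟩
  refine le_OPT1 (hv.monotoneOn hma hmb (haa.trans hab)) ?_
  intro x hx
  by_cases hxa : v a' ≤ x
  · refine (OPT1_le_theta ⟨hxa, hx.2⟩).trans ?_
    exact max_le_max (evacL_anti_i hw hc ha haa) le_rfl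
  · push_neg at hxa
    refine (OPT1_le_theta (i := a') ⟨le_rfl, hv.monotoneOn hma' hmb hab⟩).trans ?_
    refine max_le ?_ ?_
    · rw [evacL_self hv hma'.1 hma'.2]; exact theta_nonneg
    · exact (evacR_anti_x hτ hxa.le).trans (le_max_right _ _)

lemma OPT1_mono_right (hv : StrictMonoOn v (Set.Icc 1 n))
    (hw : ∀ h, 1 ≤ h → h ≤ n → 0 < w h) (hc : 0 < c) (hτ : 0 < τ)
    {a b b' : ℕ} (ha : 1 ≤ a) (hab : a ≤ b) (hbb : b ≤ b') (hb' : b' ≤ n) :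
    OPT1 v w c τ n a b ≤ OPT1 v w c τ n a b' := by
  have hma : a ∈ Set.Icc 1 n := ⟨ha, (hab.trans hbb).trans hb'⟩
  have hmb : b ∈ Set.Icc 1 n := ⟨ha.trans hab, hbb.trans hb'⟩
  have hmb' : b' ∈ Set.Icc 1 n := ⟨ha.trans (hab.trans hbb), hb'⟩
  refine le_OPT1 (hv.monotoneOn hma hmb' (hab.trans hbb)) ?_
  intro x hx
  by_cases hxb : x ≤ v b
  · refine (OPT1_le_theta ⟨hx.1, hxb⟩).trans ?_
    exact max_le_max le_rfl (evacR_mono_j hw hc hbb hb')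
  · push_neg at hxb
    refine (OPT1_le_theta (j := b) ⟨hv.monotoneOn hma hmb hab, le_rfl⟩).trans ?_
    refine max_le ?_ ?_
    · exact (evacL_mono_x hτ hxb.le).trans (le_max_left _ _)
    · rw [evacR_self hv hmb.1 hmb.2]; exact theta_nonneg

end


/-- Lemma 1: the largest minimizer d_(p,i) of
f_(p,i)(t) = max (OPT(p-1,1,t)) (OPT(1,t+1,i)) on 1 ≤ t ≤ i-1 is monotone in i. -/
theorem stmt8 (n : ℕ) (v w : ℕ → ℝ) (c τ : ℝ) (p i d d' : ℕ)
    (hp : 2 ≤ p) (hi : 2 ≤ i) (hin : i ≤ n - 1)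
    (hv1 : v 1 = 0) (hv : StrictMonoOn v (Set.Icc 1 n))
    (hw : ∀ h, 1 ≤ h → h ≤ n → 0 < w h) (hc : 0 < c) (hτ : 0 < τ)
    (hd1 : 1 ≤ d) (hd2 : d ≤ i - 1)
    (hdmin : ∀ t, 1 ≤ t → t ≤ i - 1 →
      max (OPTk v w c τ n (p - 1) 1 d) (OPT1 v w c τ n (d + 1) i) ≤
        max (OPTk v w c τ n (p - 1) 1 t) (OPT1 v w c τ n (t + 1) i))
    (hdmax : ∀ t, 1 ≤ t → t ≤ i - 1 →
      max (OPTk v w c τ n (p - 1) 1 t) (OPT1 v w c τ n (t + 1) i) =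
        max (OPTk v w c τ n (p - 1) 1 d) (OPT1 v w c τ n (d + 1) i) → t ≤ d)
    (hd'1 : 1 ≤ d') (hd'2 : d' ≤ i)
    (hd'min : ∀ t, 1 ≤ t → t ≤ i →
      max (OPTk v w c τ n (p - 1) 1 d') (OPT1 v w c τ n (d' + 1) (i + 1)) ≤
        max (OPTk v w c τ n (p - 1) 1 t) (OPT1 v w c τ n (t + 1) (i + 1)))
    (hd'max : ∀ t, 1 ≤ t → t ≤ i →
      max (OPTk v w c τ n (p - 1) 1 t) (OPT1 v w c τ n (t + 1) (i + 1)) =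
        max (OPTk v w c τ n (p - 1) 1 d') (OPT1 v w c τ n (d' + 1) (i + 1)) → t ≤ d') :
    d ≤ d' := by
  by_contra hcon
  push_neg at hcon
  set A : ℕ → ℝ := fun t => OPTk v w c τ n (p - 1) 1 t with hA
  set Bi : ℕ → ℝ := fun t => OPT1 v w c τ n (t + 1) i with hBi
  set Bj : ℕ → ℝ := fun t => OPT1 v w c τ n (t + 1) (i + 1) with hBj
  have hn : i + 1 ≤ n := by omega
  have hdi : d ≤ i := by omega
  have hd'i : d' ≤ i - 1 := by omega
  -- strict inequality at level i+1
  have key1 : max (A d') (Bj d') ≤ max (A d) (Bj d) := hd'min d hd1 hdi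
  have hlt : max (A d') (Bj d') < max (A d) (Bj d) := by
    refine lt_of_le_of_ne key1 fun he => ?_
    exact absurd (hd'max d hd1 hdi he.symm) (by omega)
  -- monotonicity facts
  have mono1 : Bj d ≤ Bj d' :=
    OPT1_anti_left hv hw hc hτ (by omega) (by omega) (by omega) hn
  have mono2 : Bi d' ≤ Bj d' :=
    OPT1_mono_right hv hw hc hτ (by omega) (by omega) (by omega) hn
  have mono3 : Bi d ≤ Bj d :=
    OPT1_mono_right hv hw hc hτ (by omega) (by omega) (by omega) hn
  have hBjlt : Bj d < max (A d) (Bj d) :=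
    lt_of_le_of_lt (mono1.trans (le_max_right _ _)) hlt
  have hAd : max (A d) (Bj d) = A d := by
    rcases max_cases (A d) (Bj d) with h | h
    · exact h.1
    · exact absurd (h.1 ▸ hBjlt) (lt_irrefl _)
  rw [hAd] at hlt hBjlt
  have hAd' : A d' < A d := lt_of_le_of_lt (le_max_left _ _) hlt
  have hBjd' : Bj d' < A d := lt_of_le_of_lt (le_max_right _ _) hlt
  have hBid' : Bi d' < A d := lt_of_le_of_lt mono2 hBjd'
  have hBid : Bi d < A d := lt_of_le_of_lt mono3 hBjlt
  have hmin := hdmin d' hd'1 hd'i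
  rw [max_eq_left hBid.le] at hmin
  have : max (A d') (Bi d') < A d := max_lt hAd' hBid'
  linarith
end

section
/- (Claim ms1, non-blocking case) Let S be the non-blocking total evacuation cost. For any index 1 ≤ j ≤ n−1 and any point p with v_j < p < v_{j+1}: (i) if Σ_{1 ≤ i ≤ j} w_i − Σ_{j+1 ≤ i ≤ n} w_i ≥ 0, then S(v_j) ≤ S(p); (ii) if Σ_{1 ≤ i ≤ j} w_i − Σ_{j+1 ≤ i ≤ n} w_i < 0, then S(v_{j+1}) < S(p). -/
open Finset

/-- Non-blocking total evacuation cost of a sink at `x`: the supply at a vertex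
coinciding with the sink evacuates in no time. -/
noncomputable def msCost (v w : ℕ → ℝ) (c τ : ℝ) (n : ℕ) (x : ℝ) : ℝ :=
  ∑ i ∈ Finset.Icc 1 n,
    (if v i = x then 0 else w i * τ * |x - v i| + (w i) ^ 2 / (2 * c))

/-- Claim ms1, non-blocking case: comparing the total cost at a vertex
with the total cost at an interior point of an adjacent edge, according to the sign of
the weight difference. -/
theorem stmt12 (n : ℕ) (v w : ℕ → ℝ) (c τ : ℝ) (j : ℕ) (p : ℝ)
    (hj : 1 ≤ j) (hjn : j + 1 ≤ n)
    (hv1 : v 1 = 0) (hv : StrictMonoOn v (Set.Icc 1 n))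
    (hw : ∀ h, 1 ≤ h → h ≤ n → 0 < w h) (hc : 0 < c) (hτ : 0 < τ)
    (hp₁ : v j < p) (hp₂ : p < v (j + 1)) :
    ((0 : ℝ) ≤ (∑ i ∈ Finset.Icc 1 j, w i) - (∑ i ∈ Finset.Icc (j + 1) n, w i) →
      msCost v w c τ n (v j) ≤ msCost v w c τ n p) ∧
    ((∑ i ∈ Finset.Icc 1 j, w i) - (∑ i ∈ Finset.Icc (j + 1) n, w i) < 0 →
      msCost v w c τ n (v (j + 1)) < msCost v w c τ n p) := by
  have hjn' : j ≤ n := Nat.le_of_succ_le hjn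
  have hmono : ∀ a b : ℕ, 1 ≤ a → a ≤ b → b ≤ n → v a ≤ v b := fun a b h1 hab hbn =>
    hv.monotoneOn ⟨h1, le_trans hab hbn⟩ ⟨le_trans h1 hab, hbn⟩ hab
  have hstrict : ∀ a b : ℕ, 1 ≤ a → a < b → b ≤ n → v a < v b := fun a b h1 hab hbn =>
    hv ⟨h1, le_trans (le_of_lt hab) hbn⟩ ⟨le_trans h1 (le_of_lt hab), hbn⟩ hab
  set Wl := ∑ i ∈ Finset.Icc 1 j, w i with hWl
  set Wr := ∑ i ∈ Finset.Icc (j+1) n, w i with hWr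
  have hsplit : ∀ g : ℕ → ℝ, ∑ i ∈ Finset.Icc 1 n, g i
      = ∑ i ∈ Finset.Icc 1 j, g i + ∑ i ∈ Finset.Icc (j+1) n, g i := by
    intro g
    have q : ∀ m : ℕ, Finset.Icc (m+1) n = Finset.Ioc m n := fun m =>
      Finset.ext fun x => by simp [Nat.succ_le_iff]
    have q0 : Finset.Icc 1 n = Finset.Ioc 0 n := q 0
    have qj : Finset.Icc 1 j = Finset.Ioc 0 j :=
      Finset.ext fun x => by simp [Nat.succ_le_iff]
    rw [q0, qj, q j]
    exact (Finset.sum_Ioc_consecutive g (Nat.zero_le j) hjn').symm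
  have hwj : 0 < w j := hw j hj hjn'
  have hwj1 : 0 < w (j+1) := hw (j+1) (le_trans hj (Nat.le_succ j)) hjn
  have hsq : ∀ a : ℝ, 0 < a → 0 < a^2 / (2*c) := fun a ha => by positivity
  -- difference at v j
  have hd1 : msCost v w c τ n p - msCost v w c τ n (v j)
      = τ * (p - v j) * (Wl - Wr) + (w j)^2 / (2*c) := by
    unfold msCost
    rw [← Finset.sum_sub_distrib, hsplit]
    have e1 : ∑ i ∈ Finset.Icc 1 j,
        ((if v i = p then 0 else w i * τ * |p - v i| + (w i)^2/(2*c))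
          - (if v i = v j then 0 else w i * τ * |v j - v i| + (w i)^2/(2*c)))
        = τ * (p - v j) * Wl + (w j)^2/(2*c) := by
      have step : ∀ i ∈ Finset.Icc 1 j,
          ((if v i = p then 0 else w i * τ * |p - v i| + (w i)^2/(2*c))
            - (if v i = v j then 0 else w i * τ * |v j - v i| + (w i)^2/(2*c)))
          = w i * τ * (p - v j) + (if i = j then (w j)^2/(2*c) else 0) := by
        intro i hi
        simp only [Finset.mem_Icc] at hi
        obtain ⟨hi1, hi2⟩ := hi
        have hvile : v i ≤ v j := hmono i j hi1 hi2 hjn'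
        have hvip : v i < p := lt_of_le_of_lt hvile hp₁
        rw [if_neg (ne_of_lt hvip)]
        rw [abs_of_pos (by linarith)]
        by_cases hij : i = j
        · subst hij
          rw [if_pos rfl, if_pos rfl]
          ring
        · have hlt : i < j := lt_of_le_of_ne hi2 hij
          have : v i < v j := hstrict i j hi1 hlt hjn'
          rw [if_neg (ne_of_lt this), if_neg hij]
          rw [abs_of_pos (by linarith)]
          ring
      rw [Finset.sum_congr rfl step, Finset.sum_add_distrib, Finset.sum_ite_eq']
      rw [if_pos (Finset.mem_Icc.mpr ⟨hj, le_refl j⟩)]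
      rw [← Finset.sum_mul, ← Finset.sum_mul]
      ring
    have e2 : ∑ i ∈ Finset.Icc (j+1) n,
        ((if v i = p then 0 else w i * τ * |p - v i| + (w i)^2/(2*c))
          - (if v i = v j then 0 else w i * τ * |v j - v i| + (w i)^2/(2*c)))
        = -(τ * (p - v j) * Wr) := by
      have step : ∀ i ∈ Finset.Icc (j+1) n,
          ((if v i = p then 0 else w i * τ * |p - v i| + (w i)^2/(2*c))
            - (if v i = v j then 0 else w i * τ * |v j - v i| + (w i)^2/(2*c)))
          = -(w i * τ * (p - v j)) := by
        intro i hi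
        simp only [Finset.mem_Icc] at hi
        obtain ⟨hi1, hi2⟩ := hi
        have hj1i : v (j+1) ≤ v i := hmono (j+1) i (le_trans hj (Nat.le_succ j)) hi1 hi2
        have hpvi : p < v i := lt_of_lt_of_le hp₂ hj1i
        have hvjvi : v j < v i := lt_trans hp₁ hpvi
        rw [if_neg (ne_of_gt hpvi), if_neg (ne_of_gt hvjvi)]
        rw [abs_of_neg (by linarith), abs_of_neg (by linarith)]
        ring
      rw [Finset.sum_congr rfl step, Finset.sum_neg_distrib]
      rw [← Finset.sum_mul, ← Finset.sum_mul]
      ring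
    rw [e1, e2]
    ring
  -- difference at v (j+1)
  have hd2 : msCost v w c τ n p - msCost v w c τ n (v (j+1))
      = τ * (v (j+1) - p) * (Wr - Wl) + (w (j+1))^2 / (2*c) := by
    unfold msCost
    rw [← Finset.sum_sub_distrib, hsplit]
    have e1 : ∑ i ∈ Finset.Icc 1 j,
        ((if v i = p then 0 else w i * τ * |p - v i| + (w i)^2/(2*c))
          - (if v i = v (j+1) then 0 else w i * τ * |v (j+1) - v i| + (w i)^2/(2*c)))
        = -(τ * (v (j+1) - p) * Wl) := by
      have step : ∀ i ∈ Finset.Icc 1 j,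
          ((if v i = p then 0 else w i * τ * |p - v i| + (w i)^2/(2*c))
            - (if v i = v (j+1) then 0 else w i * τ * |v (j+1) - v i| + (w i)^2/(2*c)))
          = -(w i * τ * (v (j+1) - p)) := by
        intro i hi
        simp only [Finset.mem_Icc] at hi
        obtain ⟨hi1, hi2⟩ := hi
        have hvile : v i ≤ v j := hmono i j hi1 hi2 hjn'
        have hvip : v i < p := lt_of_le_of_lt hvile hp₁
        have hvij1 : v i < v (j+1) := lt_trans hvip hp₂
        rw [if_neg (ne_of_lt hvip), if_neg (ne_of_lt hvij1)]
        rw [abs_of_pos (by linarith), abs_of_pos (by linarith)]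
        ring
      rw [Finset.sum_congr rfl step, Finset.sum_neg_distrib]
      rw [← Finset.sum_mul, ← Finset.sum_mul]
      ring
    have e2 : ∑ i ∈ Finset.Icc (j+1) n,
        ((if v i = p then 0 else w i * τ * |p - v i| + (w i)^2/(2*c))
          - (if v i = v (j+1) then 0 else w i * τ * |v (j+1) - v i| + (w i)^2/(2*c)))
        = τ * (v (j+1) - p) * Wr + (w (j+1))^2/(2*c) := by
      have step : ∀ i ∈ Finset.Icc (j+1) n,
          ((if v i = p then 0 else w i * τ * |p - v i| + (w i)^2/(2*c))
            - (if v i = v (j+1) then 0 else w i * τ * |v (j+1) - v i| + (w i)^2/(2*c)))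
          = w i * τ * (v (j+1) - p) + (if i = j+1 then (w (j+1))^2/(2*c) else 0) := by
        intro i hi
        simp only [Finset.mem_Icc] at hi
        obtain ⟨hi1, hi2⟩ := hi
        have hj1i : v (j+1) ≤ v i := hmono (j+1) i (le_trans hj (Nat.le_succ j)) hi1 hi2
        have hpvi : p < v i := lt_of_lt_of_le hp₂ hj1i
        rw [if_neg (ne_of_gt hpvi)]
        rw [abs_of_neg (show p - v i < 0 by linarith)]
        by_cases hij : i = j+1
        · subst hij
          rw [if_pos rfl, if_pos rfl]
          ring
        · have hlt : j+1 < i := lt_of_le_of_ne hi1 (Ne.symm hij)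
          have : v (j+1) < v i := hstrict (j+1) i (le_trans hj (Nat.le_succ j)) hlt hi2
          rw [if_neg (ne_of_gt this), if_neg hij]
          rw [abs_of_neg (by linarith)]
          ring
      rw [Finset.sum_congr rfl step, Finset.sum_add_distrib, Finset.sum_ite_eq']
      rw [if_pos (Finset.mem_Icc.mpr ⟨le_refl (j+1), hjn⟩)]
      rw [← Finset.sum_mul, ← Finset.sum_mul]
      ring
    rw [e1, e2]
    ring
  constructor
  · intro h
    have h1 : 0 ≤ τ * (p - v j) * (Wl - Wr) := by
      apply mul_nonneg
      apply mul_nonneg (le_of_lt hτ) (by linarith)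
      linarith
    have h2 : 0 < (w j)^2 / (2*c) := hsq _ hwj
    linarith
  · intro h
    have h1 : 0 < τ * (v (j+1) - p) * (Wr - Wl) := by
      apply mul_pos
      apply mul_pos hτ (by linarith)
      linarith
    have h2 : 0 < (w (j+1))^2 / (2*c) := hsq _ hwj1
    linarith
end

section
/- (Claim ms2, non-blocking case) Let S be the non-blocking total evacuation cost. Then S attains its minimum over [v_1, v_n] at some vertex: there exists an index j with 1 ≤ j ≤ n such that S(v_j) ≤ S(x) for all x ∈ [v_1, v_n]. -/
open Finset

/-! The sink discount makes `msCost` discontinuous at the vertices; the cost without it,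
`msFullCost`, is affine between consecutive vertices, so on each gap it is minimised at an endpoint,
where `msCost` is no larger, while off the vertices the two costs agree. -/

theorem ConcaveOn.sum {𝕜 E β ι : Type*} [Semiring 𝕜] [PartialOrder 𝕜] [AddCommMonoid E]
    [AddCommMonoid β] [PartialOrder β] [IsOrderedAddMonoid β] [SMul 𝕜 E] [Module 𝕜 β]
    {s : Set E} {t : Finset ι} {f : ι → E → β} (hs : Convex 𝕜 s)
    (hf : ∀ i ∈ t, ConcaveOn 𝕜 s (f i)) : ConcaveOn 𝕜 s fun x => ∑ i ∈ t, f i x := by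
  have hsum : ConcaveOn 𝕜 s (∑ i ∈ t, f i) :=
    Finset.sum_induction f (ConcaveOn 𝕜 s) (fun _ _ => ConcaveOn.add) (concaveOn_const 0 hs) hf
  simpa only [Finset.sum_fn] using hsum

theorem concaveOn_abs_sub_of_notMem_Ioo {𝕜 : Type*} [Field 𝕜] [LinearOrder 𝕜]
    [IsStrictOrderedRing 𝕜] {a b p : 𝕜} (hp : p ∉ Set.Ioo a b) :
    ConcaveOn 𝕜 (Set.Icc a b) fun x => |x - p| := by
  by_cases hpa : p ≤ a
  · refine ((concaveOn_id (convex_Icc a b)).add_const (-p)).congr fun x hx => ?_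
    rw [Pi.add_apply, id, abs_of_nonneg (sub_nonneg.2 (hpa.trans hx.1)), sub_eq_add_neg]
  · have hbp : b ≤ p := not_lt.1 fun hpb => hp ⟨not_le.1 hpa, hpb⟩
    refine ((convexOn_id (convex_Icc a b)).neg.add_const p).congr fun x hx => ?_
    rw [Pi.add_apply, Pi.neg_apply, id, abs_of_nonpos (sub_nonpos.2 (hx.2.trans hbp))]
    ring

theorem exists_le_lt_succ_of_le_of_lt {α : Type*} [LinearOrder α] (v : ℕ → α) {m n : ℕ} {x : α}
    (hmn : m ≤ n) (hm : v m ≤ x) (hn : x < v n) :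
    ∃ k, m ≤ k ∧ k < n ∧ v k ≤ x ∧ x < v (k + 1) := by
  induction n, hmn using Nat.le_induction with
  | base => exact absurd hn (not_lt.2 hm)
  | succ n hmn ih =>
    by_cases hxn : x < v n
    · obtain ⟨k, hmk, hkn, hk⟩ := ih hxn
      exact ⟨k, hmk, hkn.trans n.lt_succ_self, hk⟩
    · exact ⟨n, hmn, n.lt_succ_self, not_lt.1 hxn, hn⟩

theorem StrictMonoOn.notMem_Ioo_succ {α : Type*} [LinearOrder α] {v : ℕ → α} {s : Set ℕ}
    (hv : StrictMonoOn v s) {i k : ℕ} (hi : i ∈ s) (hk : k ∈ s) (hk' : k + 1 ∈ s) :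
    v i ∉ Set.Ioo (v k) (v (k + 1)) := by
  rintro ⟨hki, hik⟩
  have := (hv.lt_iff_lt hk hi).1 hki
  have := (hv.lt_iff_lt hi hk').1 hik
  omega

noncomputable def msFullCost (v w : ℕ → ℝ) (c τ : ℝ) (n : ℕ) (x : ℝ) : ℝ :=
  ∑ i ∈ Finset.Icc 1 n, (w i * τ * |x - v i| + (w i) ^ 2 / (2 * c))

section Cost

variable {v w : ℕ → ℝ} {c τ : ℝ} {n : ℕ}

theorem msCost_le_msFullCost (hw : ∀ i ∈ Finset.Icc 1 n, 0 ≤ w i) (hc : 0 ≤ c) (hτ : 0 ≤ τ)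
    (x : ℝ) : msCost v w c τ n x ≤ msFullCost v w c τ n x := by
  refine Finset.sum_le_sum fun i hi => ?_
  split_ifs
  · have := hw i hi
    positivity
  · exact le_rfl

theorem msCost_eq_msFullCost {x : ℝ} (hx : ∀ i ∈ Finset.Icc 1 n, v i ≠ x) :
    msCost v w c τ n x = msFullCost v w c τ n x :=
  Finset.sum_congr rfl fun i hi => if_neg (hx i hi)

theorem concaveOn_msFullCost (hw : ∀ i ∈ Finset.Icc 1 n, 0 ≤ w i) (hτ : 0 ≤ τ) {a b : ℝ}
    (hgap : ∀ i ∈ Finset.Icc 1 n, v i ∉ Set.Ioo a b) :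
    ConcaveOn ℝ (Set.Icc a b) (msFullCost v w c τ n) :=
  ConcaveOn.sum (convex_Icc a b) fun i hi =>
    ((concaveOn_abs_sub_of_notMem_Ioo (hgap i hi)).smul (mul_nonneg (hw i hi) hτ)).add_const _

end Cost

theorem stmt13_general (n : ℕ) (v w : ℕ → ℝ) (c τ : ℝ)
    (hn : 1 ≤ n)
    (hv : StrictMonoOn v (Set.Icc 1 n))
    (hw : ∀ h, 1 ≤ h → h ≤ n → 0 < w h) (hc : 0 < c) (hτ : 0 < τ) :
    ∃ j : ℕ, 1 ≤ j ∧ j ≤ n ∧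
      ∀ x ∈ Set.Icc (v 1) (v n), msCost v w c τ n (v j) ≤ msCost v w c τ n x := by
  have hw₀ : ∀ i ∈ Finset.Icc 1 n, 0 ≤ w i := fun i hi =>
    (hw i (Finset.mem_Icc.1 hi).1 (Finset.mem_Icc.1 hi).2).le
  obtain ⟨j, hj, hjmin⟩ := (Finset.Icc 1 n).exists_min_image (fun i => msCost v w c τ n (v i))
    ⟨1, Finset.mem_Icc.2 ⟨le_rfl, hn⟩⟩
  refine ⟨j, (Finset.mem_Icc.1 hj).1, (Finset.mem_Icc.1 hj).2, fun x hx => ?_⟩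
  by_cases hvx : ∃ i ∈ Finset.Icc 1 n, v i = x
  · obtain ⟨i, hi, rfl⟩ := hvx
    exact hjmin i hi
  push Not at hvx
  obtain ⟨k, hk1, hkn, hkx, hxk⟩ := exists_le_lt_succ_of_le_of_lt v hn hx.1
    (hx.2.lt_of_ne (hvx n (Finset.mem_Icc.2 ⟨hn, le_rfl⟩)).symm)
  have hk : k ∈ Finset.Icc 1 n := Finset.mem_Icc.2 ⟨hk1, hkn.le⟩
  have hk' : k + 1 ∈ Finset.Icc 1 n := Finset.mem_Icc.2 ⟨by omega, hkn⟩
  have hgap : ∀ i ∈ Finset.Icc 1 n, v i ∉ Set.Ioo (v k) (v (k + 1)) := fun i hi =>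
    hv.notMem_Ioo_succ (Finset.mem_Icc.1 hi) (Finset.mem_Icc.1 hk) (Finset.mem_Icc.1 hk')
  calc msCost v w c τ n (v j)
      ≤ min (msCost v w c τ n (v k)) (msCost v w c τ n (v (k + 1))) :=
        le_min (hjmin k hk) (hjmin (k + 1) hk')
    _ ≤ min (msFullCost v w c τ n (v k)) (msFullCost v w c τ n (v (k + 1))) :=
        min_le_min (msCost_le_msFullCost hw₀ hc.le hτ.le _) (msCost_le_msFullCost hw₀ hc.le hτ.le _)
    _ ≤ msFullCost v w c τ n x :=
        (concaveOn_msFullCost hw₀ hτ.le hgap).min_le_of_mem_Icc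
          (Set.left_mem_Icc.2 (hkx.trans hxk.le)) (Set.right_mem_Icc.2 (hkx.trans hxk.le))
          ⟨hkx, hxk.le⟩
    _ = msCost v w c τ n x := (msCost_eq_msFullCost hvx).symm

/-- Claim ms2, non-blocking case: the total evacuation cost attains its
minimum over [v_1, v_n] at some vertex. -/
theorem stmt13 (n : ℕ) (v w : ℕ → ℝ) (c τ : ℝ)
    (hn : 1 ≤ n)
    (hv1 : v 1 = 0) (hv : StrictMonoOn v (Set.Icc 1 n))
    (hw : ∀ h, 1 ≤ h → h ≤ n → 0 < w h) (hc : 0 < c) (hτ : 0 < τ) :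
    ∃ j : ℕ, 1 ≤ j ∧ j ≤ n ∧
      ∀ x ∈ Set.Icc (v 1) (v n), msCost v w c τ n (v j) ≤ msCost v w c τ n x :=
  stmt13_general n v w c τ hn hv hw hc hτ
end

section
/- (Lemma 3, non-blocking case) For indices 1 ≤ i < j ≤ n+1 define the minisum 1-sink cost OPT(i, j) as the minimum over x ∈ [v_i, v_{j−1}] of Σ_{l=i}^{j−1} w_l·τ·|x − v_l|. Then for any integers i and j with 1 ≤ i+1 < j ≤ n, the concave Monge property holds: OPT(i, j) + OPT(i+1, j+1) ≤ OPT(i+1, j) + OPT(i, j+1). -/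
open Finset

/-- Minisum 1-sink cost (non-blocking case) of the vertex interval [v_i, v_(j-1)]:
the minimum over x ∈ [v_i, v_(j-1)] of Σ_(l=i)^(j-1) w_l·τ·|x - v_l|. -/
noncomputable def OPTms (v w : ℕ → ℝ) (τ : ℝ) (i j : ℕ) : ℝ :=
  sInf ((fun x => ∑ l ∈ Finset.Icc i (j - 1), w l * τ * |x - v l|) ''
    Set.Icc (v i) (v (j - 1)))

/-!
For every sink `x` of the inner interval `[v_{i+1}, v_{j-1}]` and every sink `y` of the outer
interval `[v_i, v_j]`, the sinks `min x y` and `max x y` are admissible for `OPT(i, j)` and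
`OPT(i+1, j+1)` respectively. The common vertices `i+1, …, j-1` contribute the same total in both
pairings, and the end vertex that is moved (`v_i` if `x ≤ y`, `v_j` otherwise) is moved towards
the sink, so its cost can only drop. Taking infima over `x` and `y` gives the Monge inequality.
-/

theorem sInf_add_sInf_le_sInf_add_sInf {C D A B : Set ℝ} (hC : BddBelow C) (hD : BddBelow D)
    (hA : A.Nonempty) (hB : B.Nonempty)
    (h : ∀ a ∈ A, ∀ b ∈ B, ∃ c ∈ C, ∃ d ∈ D, c + d ≤ a + b) :
    sInf C + sInf D ≤ sInf A + sInf B := by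
  have hAB : ∀ a ∈ A, ∀ b ∈ B, sInf C + sInf D ≤ a + b := fun a ha b hb => by
    obtain ⟨c, hc, d, hd, hcd⟩ := h a ha b hb
    linarith [csInf_le hC hc, csInf_le hD hd]
  have : sInf C + sInf D - sInf B ≤ sInf A := le_csInf hA fun a ha => by
    have : sInf C + sInf D - a ≤ sInf B := le_csInf hB fun b hb => by linarith [hAB a ha b hb]
    linarith
  linarith

noncomputable def sinkCost (v w : ℕ → ℝ) (τ : ℝ) (s : Finset ℕ) (x : ℝ) : ℝ :=
  ∑ l ∈ s, w l * τ * |x - v l|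

section sinkCost

variable {v w : ℕ → ℝ} {τ : ℝ}

theorem OPTms_eq_sInf_sinkCost (i j : ℕ) :
    OPTms v w τ i j = sInf (sinkCost v w τ (Icc i (j - 1)) '' Set.Icc (v i) (v (j - 1))) :=
  rfl

theorem sinkCost_nonneg {s : Finset ℕ} (hw : ∀ l ∈ s, 0 ≤ w l) (hτ : 0 ≤ τ) (x : ℝ) :
    0 ≤ sinkCost v w τ s x :=
  sum_nonneg fun l hl => by have := hw l hl; positivity

theorem bddBelow_sinkCost_image {s : Finset ℕ} (hw : ∀ l ∈ s, 0 ≤ w l) (hτ : 0 ≤ τ)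
    (I : Set ℝ) : BddBelow (sinkCost v w τ s '' I) :=
  ⟨0, Set.forall_mem_image.2 fun x _ => sinkCost_nonneg hw hτ x⟩

theorem sinkCost_insert {s : Finset ℕ} {p : ℕ} (hp : p ∉ s) (x : ℝ) :
    sinkCost v w τ (insert p s) x = w p * τ * |x - v p| + sinkCost v w τ s x :=
  sum_insert hp

theorem sinkCost_insert_min_add_sinkCost_insert_max_le {s : Finset ℕ} {p q : ℕ}
    (hp : p ∉ s) (hq : q ∉ s) (hpq : p ≠ q) (hwp : 0 ≤ w p) (hwq : 0 ≤ w q) (hτ : 0 ≤ τ)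
    {x : ℝ} (hx : x ∈ Set.Icc (v p) (v q)) (y : ℝ) :
    sinkCost v w τ (insert p s) (min x y) + sinkCost v w τ (insert q s) (max x y) ≤
      sinkCost v w τ s x + sinkCost v w τ (insert p (insert q s)) y := by
  have hp' : p ∉ insert q s := by simp [hpq, hp]
  simp only [sinkCost_insert hp, sinkCost_insert hq, sinkCost_insert hp']
  have hc (l : ℕ) (hwl : 0 ≤ w l) {z : ℝ} (hz : z ∈ Set.uIcc (v l) y) :
      w l * τ * |z - v l| ≤ w l * τ * |y - v l| :=
    mul_le_mul_of_nonneg_left (Set.abs_sub_left_of_mem_uIcc hz) (mul_nonneg hwl hτ)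
  rcases le_total x y with hxy | hyx
  · rw [min_eq_left hxy, max_eq_right hxy]
    linarith [hc p hwp (Set.mem_uIcc_of_le hx.1 hxy)]
  · rw [min_eq_right hyx, max_eq_left hyx]
    linarith [hc q hwq (Set.mem_uIcc_of_ge hyx hx.2)]

theorem sInf_sinkCost_monge {s : Finset ℕ} {p q : ℕ} (hp : p ∉ s) (hq : q ∉ s) (hpq : p ≠ q)
    (hw : ∀ l ∈ insert p (insert q s), 0 ≤ w l) (hτ : 0 ≤ τ) {a b : ℝ}
    (hpa : v p ≤ a) (hab : a ≤ b) (hbq : b ≤ v q) :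
    sInf (sinkCost v w τ (insert p s) '' Set.Icc (v p) b) +
        sInf (sinkCost v w τ (insert q s) '' Set.Icc a (v q)) ≤
      sInf (sinkCost v w τ s '' Set.Icc a b) +
        sInf (sinkCost v w τ (insert p (insert q s)) '' Set.Icc (v p) (v q)) := by
  refine sInf_add_sInf_le_sInf_add_sInf
    (bddBelow_sinkCost_image (fun l hl => hw l (insert_subset_insert p (subset_insert q s) hl))
      hτ _)
    (bddBelow_sinkCost_image (fun l hl => hw l (subset_insert p _ hl)) hτ _)
    ((Set.nonempty_Icc.2 hab).image _) ((Set.nonempty_Icc.2 (by linarith)).image _) ?_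
  rintro _ ⟨x, hx, rfl⟩ _ ⟨y, hy, rfl⟩
  refine ⟨_, ⟨min x y, ⟨le_min (by linarith [hx.1]) hy.1, min_le_of_left_le hx.2⟩, rfl⟩,
    _, ⟨max x y, ⟨le_max_of_le_left hx.1, max_le (by linarith [hx.2]) hy.2⟩, rfl⟩, ?_⟩
  exact sinkCost_insert_min_add_sinkCost_insert_max_le hp hq hpq (hw p (by simp))
    (hw q (by simp)) hτ ⟨by linarith [hx.1], by linarith [hx.2]⟩ y

end sinkCost

theorem stmt15_general (n : ℕ) (v w : ℕ → ℝ) (τ : ℝ) (i j : ℕ)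
    (hi : 1 ≤ i) (hij : i + 1 < j) (hjn : j ≤ n)
    (hv : StrictMonoOn v (Set.Icc 1 n))
    (hw : ∀ h, 1 ≤ h → h ≤ n → 0 < w h) (hτ : 0 < τ) :
    OPTms v w τ i j + OPTms v w τ (i + 1) (j + 1) ≤
      OPTms v w τ (i + 1) j + OPTms v w τ i (j + 1) := by
  have hv_le {k l : ℕ} (hk : 1 ≤ k) (hkl : k ≤ l) (hl : l ≤ n) : v k ≤ v l :=
    hv.monotoneOn ⟨hk, by omega⟩ ⟨by omega, hl⟩ hkl
  set s := Icc (i + 1) (j - 1)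
  have hCs : Icc i (j - 1) = insert i s := by ext; simp [s]; omega
  have hDs : Icc (i + 1) j = insert j s := by ext; simp [s]; omega
  have hBs : Icc i j = insert i (insert j s) := by ext; simp [s]; omega
  have hws : ∀ l ∈ insert i (insert j s), 0 ≤ w l := fun l hl => by
    rw [← hBs, mem_Icc] at hl
    exact (hw l (by omega) (by omega)).le
  have hmonge := sInf_sinkCost_monge (τ := τ) (a := v (i + 1)) (b := v (j - 1))
    (by simp [s]) (by simp [s]; omega) (by omega) hws hτ.le
    (hv_le hi (by omega) (by omega)) (hv_le (by omega) (by omega) (by omega))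
    (hv_le (by omega) (by omega) hjn)
  simpa only [OPTms_eq_sInf_sinkCost, Nat.add_sub_cancel, hCs, hDs, hBs] using hmonge

/-- Lemma 3, non-blocking case: the minisum 1-sink costs satisfy the
concave Monge property: OPT(i,j) + OPT(i+1,j+1) ≤ OPT(i+1,j) + OPT(i,j+1). -/
theorem stmt15 (n : ℕ) (v w : ℕ → ℝ) (τ : ℝ) (i j : ℕ)
    (hi : 1 ≤ i) (hij : i + 1 < j) (hjn : j ≤ n)
    (hv1 : v 1 = 0) (hv : StrictMonoOn v (Set.Icc 1 n))
    (hw : ∀ h, 1 ≤ h → h ≤ n → 0 < w h) (hτ : 0 < τ) :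
    OPTms v w τ i j + OPTms v w τ (i + 1) (j + 1) ≤
      OPTms v w τ (i + 1) j + OPTms v w τ i (j + 1) :=
  stmt15_general n v w τ i j hi hij hjn hv hw hτ
end
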